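/- arXiv:2406.12610 — 3 statements merged into one kernel-verified Lean document; each statement's English description precedes it below -/
import Mathlib

section
/- For every inversion sequence α of length n, hat_max(α) is a permutation of {1,…,n}; moreover, for every n ≥ 0 the map hat_max : I_n → S_n is a bijection. -/
/-- Entry of the word `w` at (1-based) position `i`. -/
def ent (w : List ℕ) (i : ℕ) : ℕ := w.getD (i - 1) 0

/-- `w` is an endofunction of `{1,…,n}`, where `n = w.length`. -/
def IsEndo (w : List ℕ) : Prop := ∀ x ∈ w, 1 ≤ x ∧ x ≤ w.length

/-- `w` is an inversion sequence. -/
def IsInvSeq (w : List ℕ) : Prop :=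
  ∀ i ∈ Finset.Icc 1 w.length, 1 ≤ ent w i ∧ ent w i ≤ i

/-- The set of `d`-ascents of `w` (1-based positions): position `1` is always a
`d`-ascent, and `i ≥ 2` is a `d`-ascent if `a_i > a_{i-1} - d`. -/
def ascSet (d : ℕ) (w : List ℕ) : Finset ℕ :=
  (Finset.Icc 1 w.length).filter fun i => i = 1 ∨ ent w (i - 1) < ent w i + d

/-- The number of `d`-ascents of `w`. -/
def ascCard (d : ℕ) (w : List ℕ) : ℕ := (ascSet d w).card

/-- `w` is a `d`-ascent sequence. -/
def IsDAscSeq (d : ℕ) (w : List ℕ) : Prop :=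
  IsEndo w ∧ ∀ i ∈ Finset.Icc 1 w.length, ent w i ≤ 1 + ascCard d (w.take (i - 1))

/-- One step of the map `M`: add one to every entry strictly to the left of
position `j` that is weakly larger than the entry in position `j`. -/
def Mstep (w : List ℕ) (j : ℕ) : List ℕ :=
  w.mapIdx fun k x => if k + 1 < j ∧ ent w j ≤ x then x + 1 else x

/-- The `d`-hat map: apply `Mstep` successively at the `d`-ascents of `w`,
listed in increasing order. -/
def hatd (d : ℕ) (w : List ℕ) : List ℕ :=
  ((ascSet d w).sort (· ≤ ·)).foldl Mstep w

/-- Largest entry of `w`. -/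
def maxEnt (w : List ℕ) : ℕ := w.foldr max 0

/-- `w` is a Cayley permutation: its image is `{1,…,max w}`. -/
def IsCayley (w : List ℕ) : Prop := ∀ x, x ∈ w ↔ (1 ≤ x ∧ x ≤ maxEnt w)

open Classical in
/-- The set of positions of leftmost copies of the values of `w`. -/
noncomputable def nubSet (w : List ℕ) : Finset ℕ :=
  (Finset.Icc 1 w.length).filter fun i =>
    ∀ j ∈ Finset.Icc 1 w.length, ent w j = ent w i → i ≤ j

/-- The least `d` such that `w` is a `d`-ascent sequence. -/
noncomputable def mind (w : List ℕ) : ℕ := sInf {d | IsDAscSeq d w}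

/-- The set `H(w)` of all the (meaningful) `d`-hats of `w`. -/
def Hset (w : List ℕ) : Set (List ℕ) := {x | ∃ d, mind w ≤ d ∧ x = hatd d w}

/-- The max-hat map. -/
def hatmax (w : List ℕ) : List ℕ := hatd (w.length - 1) w

/-- Weak descent set of `w`. -/
def wDesSet (w : List ℕ) : Finset ℕ :=
  (Finset.Icc 2 w.length).filter fun i => ent w i ≤ ent w (i - 1)

/-- The number of weak descents of `w`. -/
def wdes (w : List ℕ) : ℕ := (wDesSet w).card

/-- `i` is a right-left minimum index of `w`. -/
def IsRLMinIdx (w : List ℕ) (i : ℕ) : Prop :=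
  1 ≤ i ∧ i ≤ w.length ∧ ∀ j, i < j → j ≤ w.length → ent w i < ent w j

/-- The set of right-left minima pairs of `w`. -/
def rlMinP (w : List ℕ) : Set (ℕ × ℕ) :=
  {p | IsRLMinIdx w p.1 ∧ p.2 = ent w p.1}

/-- `w` is the word of a permutation of `{1,…,n}`, where `n = w.length`. -/
def IsPermWord (w : List ℕ) : Prop :=
  w.Nodup ∧ ∀ x ∈ w, 1 ≤ x ∧ x ≤ w.length

/-- Add one to every entry of `w` that is `≥ a`. -/
def plus (w : List ℕ) (a : ℕ) : List ℕ :=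
  w.map fun x => if a ≤ x then x + 1 else x

/-- Add one to every entry of `w` that is `≥ a`, then append `a` at the end. -/
def plusApp (w : List ℕ) (a : ℕ) : List ℕ := plus w a ++ [a]

/-- The index of the maximal increasing run of `w` containing position `i`:
one plus the number of descents up to position `i`. -/
def irIdx (w : List ℕ) (i : ℕ) : ℕ :=
  1 + ((Finset.Icc 2 i).filter fun j => ent w j < ent w (j - 1)).card

/-- `w` is ir-subdiagonal: every entry `c` in the `i`th maximal increasing run
satisfies `c ≤ n + 1 - i`. -/
def IsIrSub (w : List ℕ) : Prop :=
  ∀ i ∈ Finset.Icc 1 w.length, ent w i + irIdx w i ≤ w.length + 1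

/-- The index of the maximal decreasing run of `w` containing position `i`. -/
def drIdx (w : List ℕ) (i : ℕ) : ℕ :=
  1 + ((Finset.Icc 2 i).filter fun j => ent w (j - 1) < ent w j).card

/-- `w` is dr-subdiagonal: every entry `c` in the `i`th maximal decreasing run
satisfies `c ≤ n + 1 - i`. -/
def IsDrSub (w : List ℕ) : Prop :=
  ∀ i ∈ Finset.Icc 1 w.length, ent w i + drIdx w i ≤ w.length + 1

/-- `w` is a weak descent sequence. -/
def IsWDesSeq (w : List ℕ) : Prop :=
  IsInvSeq w ∧ ∀ i ∈ Finset.Icc 1 w.length, ent w i ≤ 1 + wdes (w.take (i - 1))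

/-- `w` is a primitive ascent sequence: an ascent sequence with no flat steps. -/
def IsPrimAscSeq (w : List ℕ) : Prop :=
  IsDAscSeq 0 w ∧ ∀ i ∈ Finset.Icc 1 (w.length - 1), ent w i ≠ ent w (i + 1)

/-- Insert position `i` into a list of positions sorted by the Burge order:
ascending entries, ties broken by descending position. -/
def bInsert (w : List ℕ) (i : ℕ) : List ℕ → List ℕ
  | [] => [i]
  | j :: t =>
      if ent w i < ent w j ∨ (ent w i = ent w j ∧ j ≤ i) then i :: j :: t
      else j :: bInsert w i t

/-- The permutation `burget w` obtained from the Burge transpose of the biword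
with top row `1,…,n` and bottom row `w`: sort the positions `1,…,n` in
ascending order of their entries, breaking ties in descending order of
position. -/
def burget (w : List ℕ) : List ℕ :=
  ((List.range w.length).map (· + 1)).foldr (bInsert w) []

/-! ### Auxiliary machinery for stmt13 -/

/-- Simplified form of the hat map on inversion sequences. -/
def hat' (w : List ℕ) : List ℕ := w.foldl plusApp []

lemma length_plus (w : List ℕ) (a : ℕ) : (plus w a).length = w.length := by
  simp [plus]

lemma length_plusApp (w : List ℕ) (a : ℕ) : (plusApp w a).length = w.length + 1 := by
  simp [plusApp, plus]

lemma hat'_snoc (v : List ℕ) (a : ℕ) : hat' (v ++ [a]) = plusApp (hat' v) a := by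
  simp [hat', List.foldl_append]

lemma length_hat' (w : List ℕ) : (hat' w).length = w.length := by
  induction w using List.reverseRecOn with
  | nil => rfl
  | append_singleton v a ih => rw [hat'_snoc, length_plusApp, ih]; simp

lemma length_Mstep (w : List ℕ) (j : ℕ) : (Mstep w j).length = w.length := by
  simp [Mstep]

lemma ent_append (v : List ℕ) (a i : ℕ) (h1 : 1 ≤ i) (h2 : i ≤ v.length) :
    ent (v ++ [a]) i = ent v i := by
  unfold ent
  rw [List.getD_append]
  omega

lemma ent_snoc_last (v : List ℕ) (a : ℕ) : ent (v ++ [a]) (v.length + 1) = a := by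
  unfold ent
  rw [Nat.add_sub_cancel, List.getD_append_right _ _ _ _ (le_refl _)]
  simp

lemma ent_eq_getElem (w : List ℕ) (i : ℕ) (h1 : 1 ≤ i) (h2 : i ≤ w.length) :
    ent w i = w[i - 1]'(by omega) :=
  List.getD_eq_getElem w 0 (by omega)

lemma invseq_snoc_iff (v : List ℕ) (a : ℕ) :
    IsInvSeq (v ++ [a]) ↔ IsInvSeq v ∧ 1 ≤ a ∧ a ≤ v.length + 1 := by
  constructor
  · intro h
    refine ⟨?_, ?_⟩
    · intro i hi
      rw [Finset.mem_Icc] at hi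
      have := h i (by rw [List.length_append, Finset.mem_Icc]; simp; omega)
      rwa [ent_append v a i hi.1 hi.2] at this
    · have := h (v.length + 1) (by rw [List.length_append, Finset.mem_Icc]; simp)
      rwa [ent_snoc_last] at this
  · rintro ⟨hv, h1, h2⟩ i hi
    rw [List.length_append, List.length_singleton, Finset.mem_Icc] at hi
    rcases Nat.lt_or_ge i (v.length + 1) with hlt | hge
    · rw [ent_append v a i hi.1 (by omega)]
      exact hv i (Finset.mem_Icc.mpr ⟨hi.1, by omega⟩)
    · have : i = v.length + 1 := by omega
      subst this
      rw [ent_snoc_last]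
      exact ⟨h1, h2⟩

lemma Mstep_append (v : List ℕ) (a j : ℕ) (h1 : 1 ≤ j) (h2 : j ≤ v.length) :
    Mstep (v ++ [a]) j = Mstep v j ++ [a] := by
  have he : ent (v ++ [a]) j = ent v j := ent_append v a j h1 h2
  apply List.ext_getElem
  · simp [length_Mstep, Mstep]
  intro i hL hR
  simp only [length_Mstep, List.length_append, List.length_singleton] at hL
  simp only [Mstep, List.getElem_mapIdx, he]
  rcases Nat.lt_or_ge i v.length with hi | hi
  · rw [List.getElem_append_left (by omega), List.getElem_append_left (by simpa [Mstep] using hi)]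
    simp [Mstep, List.getElem_mapIdx]
  · have hiv : i = v.length := by omega
    subst hiv
    rw [List.getElem_append_right (by omega), List.getElem_append_right (by simp [Mstep])]
    simp [Mstep]
    omega

lemma Mstep_last (u : List ℕ) (a : ℕ) :
    Mstep (u ++ [a]) (u.length + 1) = plusApp u a := by
  have he : ent (u ++ [a]) (u.length + 1) = a := ent_snoc_last u a
  apply List.ext_getElem
  · simp [length_Mstep, plusApp, length_plus]
  intro i hL hR
  simp only [length_Mstep, List.length_append, List.length_singleton] at hL
  simp only [Mstep, List.getElem_mapIdx, he]
  rcases Nat.lt_or_ge i u.length with hi | hi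
  · rw [List.getElem_append_left (by omega)]
    have : (plusApp u a)[i] = (plus u a)[i]'(by simp [length_plus, hi]) := by
      unfold plusApp
      exact List.getElem_append_left (by simp [length_plus, hi])
    rw [this]
    simp only [plus, List.getElem_map]
    have hii : i + 1 < u.length + 1 := by omega
    simp [hii]
  · have hiv : i = u.length := by omega
    subst hiv
    rw [List.getElem_append_right (by omega)]
    have : (plusApp u a)[u.length]'hR = a := by
      unfold plusApp
      show (plus u a ++ [a])[u.length]'(by simp [length_plus]) = a
      rw [List.getElem_append_right (by simp [length_plus])]
      simp [length_plus]
    rw [this]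
    simp

lemma foldl_Mstep_append (a : ℕ) :
    ∀ (js : List ℕ) (v : List ℕ), (∀ j ∈ js, 1 ≤ j ∧ j ≤ v.length) →
      js.foldl Mstep (v ++ [a]) = js.foldl Mstep v ++ [a] := by
  intro js
  induction js with
  | nil => intro v _; rfl
  | cons j t ih =>
    intro v hv
    have hj := hv j (by simp)
    simp only [List.foldl_cons]
    rw [Mstep_append v a j hj.1 hj.2]
    apply ih
    intro k hk
    rw [length_Mstep]
    exact hv k (by simp [hk])

lemma sortIcc (n : ℕ) : (Finset.Icc 1 n).sort (· ≤ ·) = List.range' 1 n := by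
  refine List.Perm.eq_of_pairwise' (Finset.pairwise_sort _ _) ?_ ?_
  · rw [List.pairwise_iff_getElem]
    intro i j hi hj hij
    simp only [List.getElem_range'_1]
    omega
  · apply List.perm_of_nodup_nodup_toFinset_eq (Finset.sort_nodup _ _) (List.nodup_range' 1 (by omega))
    ext x
    simp [List.mem_range'_1]
    omega

lemma ascSet_invseq (w : List ℕ) (h : IsInvSeq w) :
    ascSet (w.length - 1) w = Finset.Icc 1 w.length := by
  unfold ascSet
  rw [Finset.filter_eq_self]
  intro i hi
  rw [Finset.mem_Icc] at hi
  rcases Nat.eq_or_lt_of_le hi.1 with h1 | h1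
  · left; omega
  · right
    have ha := h i (Finset.mem_Icc.mpr hi)
    have hb := h (i - 1) (Finset.mem_Icc.mpr ⟨by omega, by omega⟩)
    omega

lemma hatmax_eq (w : List ℕ) (h : IsInvSeq w) : hatmax w = hat' w := by
  induction w using List.reverseRecOn with
  | nil =>
    show hatd 0 [] = hat' []
    unfold hatd
    rw [show ascSet 0 [] = Finset.Icc 1 0 from ascSet_invseq [] h, sortIcc]
    rfl
  | append_singleton v a ih =>
    rw [invseq_snoc_iff] at h
    obtain ⟨hv, ha1, ha2⟩ := h
    have hlen : (v ++ [a]).length = v.length + 1 := by simp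
    unfold hatmax hatd
    rw [ascSet_invseq _ ((invseq_snoc_iff v a).mpr ⟨hv, ha1, ha2⟩), sortIcc, hlen,
      List.range'_concat, List.foldl_append]
    have hstep : List.foldl Mstep (v ++ [a]) (List.range' 1 v.length)
        = List.foldl Mstep v (List.range' 1 v.length) ++ [a] := by
      apply foldl_Mstep_append
      intro j hj
      rw [List.mem_range'_1] at hj
      omega
    rw [hstep]
    have hv' : List.foldl Mstep v (List.range' 1 v.length) = hat' v := by
      rw [← ih hv]
      unfold hatmax hatd
      rw [ascSet_invseq v hv, sortIcc]
    rw [hv', List.foldl_cons, List.foldl_nil]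
    have : 1 + 1 * v.length = (hat' v).length + 1 := by rw [length_hat']; ring
    rw [this, Mstep_last, hat'_snoc]

lemma fplus_injective (a : ℕ) : Function.Injective (fun x : ℕ => if a ≤ x then x + 1 else x) := by
  intro x y hxy
  simp only at hxy
  split_ifs at hxy <;> omega

lemma permword_plusApp (u : List ℕ) (a : ℕ) (hu : IsPermWord u)
    (h1 : 1 ≤ a) (h2 : a ≤ u.length + 1) : IsPermWord (plusApp u a) := by
  constructor
  · unfold plusApp plus
    rw [List.nodup_append]
    refine ⟨hu.1.map (fplus_injective a), List.nodup_singleton a, ?_⟩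
    intro x hx
    simp only [List.mem_map] at hx
    obtain ⟨y, _, rfl⟩ := hx
    simp only [List.mem_singleton]
    split_ifs <;> omega
  · intro x hx
    rw [length_plusApp]
    unfold plusApp plus at hx
    rw [List.mem_append, List.mem_map] at hx
    rcases hx with ⟨y, hy, rfl⟩ | hx
    · have := hu.2 y hy
      split_ifs <;> omega
    · simp only [List.mem_singleton] at hx
      omega

lemma hat'_perm (w : List ℕ) (h : IsInvSeq w) : IsPermWord (hat' w) := by
  induction w using List.reverseRecOn with
  | nil =>
    refine ⟨List.nodup_nil, fun x hx => ?_⟩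
    rw [show hat' ([] : List ℕ) = [] from rfl] at hx
    simp at hx
  | append_singleton v a ih =>
    rw [invseq_snoc_iff] at h
    rw [hat'_snoc]
    exact permword_plusApp _ _ (ih h.1) h.2.1 (by rw [length_hat']; exact h.2.2)

lemma hat'_inj : ∀ w w' : List ℕ, IsInvSeq w → IsInvSeq w' → hat' w = hat' w' → w = w' := by
  intro w
  induction w using List.reverseRecOn with
  | nil =>
    intro w' _ _ heq
    have : w'.length = 0 := by rw [← length_hat', ← heq]; rfl
    exact (List.length_eq_zero_iff.mp this).symm
  | append_singleton v a ih =>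
    intro w' hw hw' heq
    have hlen : w'.length = v.length + 1 := by
      rw [← length_hat', ← heq, length_hat']; simp
    have hne : w' ≠ [] := by
      intro h'; rw [h'] at hlen; simp at hlen
    rcases List.eq_nil_or_concat w' with h' | ⟨v', a', h'⟩
    · exact absurd h' hne
    rw [List.concat_eq_append] at h'
    subst h'
    rw [hat'_snoc, hat'_snoc] at heq
    unfold plusApp at heq
    have hpl : (plus (hat' v) a).length = (plus (hat' v') a').length := by
      rw [length_plus, length_plus, length_hat', length_hat']
      simp at hlen
      omega
    obtain ⟨heq1, heq2⟩ := List.append_inj heq hpl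
    have haa : a = a' := by simpa using heq2
    subst haa
    rw [invseq_snoc_iff] at hw hw'
    have hvv : hat' v = hat' v' := List.map_injective_iff.mpr (fplus_injective a) heq1
    rw [ih v' hw.1 hw'.1 hvv]

lemma hat'_surj : ∀ (n : ℕ) (p : List ℕ), p.length = n → IsPermWord p →
    ∃ w, IsInvSeq w ∧ w.length = n ∧ hat' w = p := by
  intro n
  induction n with
  | zero =>
    intro p hl _
    refine ⟨[], ?_, rfl, ?_⟩
    · intro i hi; simp at hi
    · rw [List.length_eq_zero_iff.mp hl]; rfl
  | succ n ih =>
    intro p hl hp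
    have hne : p ≠ [] := by intro h'; rw [h'] at hl; simp at hl
    rcases List.eq_nil_or_concat p with h' | ⟨q, a, h'⟩
    · exact absurd h' hne
    rw [List.concat_eq_append] at h'
    subst h'
    have hq_len : q.length = n := by simp at hl; omega
    have ha : 1 ≤ a ∧ a ≤ n + 1 := by
      have := hp.2 a (by simp)
      simp at this
      omega
    have hnd := hp.1
    rw [List.nodup_append] at hnd
    have hanotq : a ∉ q := by
      intro hmem
      exact hnd.2.2 a hmem a (List.mem_singleton.mpr rfl) rfl
    have hqbound : ∀ x ∈ q, 1 ≤ x ∧ x ≤ n + 1 := by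
      intro x hx
      have := hp.2 x (by simp [hx])
      simpa [hq_len] using this
    set g : ℕ → ℕ := fun x => if a < x then x - 1 else x with hg
    have hq' : IsPermWord (q.map g) := by
      constructor
      · apply hnd.1.map_on
        intro x hx y hy hxy
        have hxa : x ≠ a := fun h => hanotq (h ▸ hx)
        have hya : y ≠ a := fun h => hanotq (h ▸ hy)
        have hxb := hqbound x hx
        have hyb := hqbound y hy
        simp only [hg] at hxy
        split_ifs at hxy <;> omega
      · intro x hx
        rw [List.length_map, hq_len]
        rw [List.mem_map] at hx
        obtain ⟨y, hy, rfl⟩ := hx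
        have hya : y ≠ a := fun h => hanotq (h ▸ hy)
        have hyb := hqbound y hy
        simp only [hg]
        split_ifs <;> omega
    obtain ⟨w, hw, hwl, hwh⟩ := ih (q.map g) (by rw [List.length_map, hq_len]) hq'
    refine ⟨w ++ [a], ?_, by simp [hwl], ?_⟩
    · rw [invseq_snoc_iff]
      exact ⟨hw, ha.1, by rw [hwl]; exact ha.2⟩
    · rw [hat'_snoc, hwh]
      unfold plusApp plus
      congr 1
      rw [List.map_map]
      have : ∀ x ∈ q, ((fun x => if a ≤ x then x + 1 else x) ∘ g) x = id x := by
        intro x hx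
        have hxa : x ≠ a := fun h => hanotq (h ▸ hx)
        have hxb := hqbound x hx
        simp only [Function.comp, hg, id]
        split_ifs <;> omega
      rw [List.map_congr_left this, List.map_id]

/-- for every inversion sequence `α` of length `n`, `hat_max(α)`
is a permutation of `{1,…,n}`; moreover `hat_max : I_n → S_n` is a bijection
for every `n ≥ 0`. -/
theorem stmt13 :
    (∀ w : List ℕ, IsInvSeq w →
      IsPermWord (hatmax w) ∧ (hatmax w).length = w.length) ∧
    (∀ n : ℕ, Set.BijOn hatmax {w : List ℕ | IsInvSeq w ∧ w.length = n}
      {p : List ℕ | IsPermWord p ∧ p.length = n}) := by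
  have key : ∀ w, IsInvSeq w → hatmax w = hat' w := hatmax_eq
  constructor
  · intro w hw
    rw [key w hw]
    exact ⟨hat'_perm w hw, length_hat' w⟩
  · intro n
    refine ⟨?_, ?_, ?_⟩
    · rintro w ⟨hw, hl⟩
      rw [Set.mem_setOf_eq, key w hw]
      exact ⟨hat'_perm w hw, by rw [length_hat', hl]⟩
    · rintro w ⟨hw, _⟩ w' ⟨hw', _⟩ heq
      rw [key w hw, key w' hw'] at heq
      exact hat'_inj w w' hw hw' heq
    · rintro p ⟨hp, hl⟩
      obtain ⟨w, hw, hwl, hwh⟩ := hat'_surj n p hl hp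
      exact ⟨w, ⟨hw, hwl⟩, by rw [key w hw, hwh]⟩
end

section
/- For each n ≥ 0, the number of weak descent sequences of length n equals the number of primitive ascent sequences of length n. -/
namespace Stmt17

open Finset

lemma getD_take' {l : List ℕ} {i k : ℕ} (h : k < i) : (l.take i).getD k 0 = l.getD k 0 := by
  rcases lt_or_ge k l.length with h' | h'
  · rw [List.getD_eq_getElem _ _ (by rw [List.length_take]; omega),
      List.getD_eq_getElem _ _ h']
    simp [List.getElem_take]
  · rw [List.getD_eq_default _ _ (by rw [List.length_take]; omega),
      List.getD_eq_default _ _ h']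

lemma ent_take {l : List ℕ} {i j : ℕ} (h1 : 1 ≤ j) (h2 : j ≤ i) :
    ent (l.take i) j = ent l j := getD_take' (by omega)

lemma ent_eq_getElem {l : List ℕ} {i : ℕ} (h1 : 1 ≤ i) (h2 : i ≤ l.length) :
    ent l i = l[i-1]'(by omega) := List.getD_eq_getElem _ _ (by omega)

lemma ent_mem {l : List ℕ} {i : ℕ} (h1 : 1 ≤ i) (h2 : i ≤ l.length) : ent l i ∈ l := by
  rw [ent_eq_getElem h1 h2]; exact List.getElem_mem _

lemma ext_ent {l1 l2 : List ℕ} (h : l1.length = l2.length)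
    (h2 : ∀ i, 1 ≤ i → i ≤ l1.length → ent l1 i = ent l2 i) : l1 = l2 := by
  apply List.ext_getElem h
  intro k hk1 hk2
  have h3 := h2 (k+1) (by omega) (by omega)
  simp only [ent, Nat.add_sub_cancel] at h3
  rw [List.getD_eq_getElem l1 0 (by omega), List.getD_eq_getElem l2 0 (by omega)] at h3
  exact h3

lemma isEndo_of_ent {l : List ℕ}
    (h : ∀ i, 1 ≤ i → i ≤ l.length → 1 ≤ ent l i ∧ ent l i ≤ i) : IsEndo l := by
  intro x hx
  obtain ⟨k, hk, rfl⟩ := List.mem_iff_getElem.mp hx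
  have h' := h (k+1) (by omega) (by omega)
  rw [ent_eq_getElem (by omega) (by omega)] at h'
  exact ⟨h'.1, h'.2.trans (by omega)⟩

lemma card_step {a i : ℕ} (P : ℕ → Prop) [DecidablePred P] (h : a ≤ i + 1) :
    ((Icc a (i+1)).filter P).card
      = ((Icc a i).filter P).card + (if P (i+1) then 1 else 0) := by
  rw [← Finset.insert_Icc_right_eq_Icc_add_one h, filter_insert]
  split
  · rw [card_insert_of_notMem
      (fun hmem => by have := (mem_filter.mp hmem).1; rw [mem_Icc] at this; omega)]
  · rw [Nat.add_zero]

/-! ### wdes of prefixes -/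

lemma wdes_take_eq {w : List ℕ} {i : ℕ} (h : i ≤ w.length) :
    wdes (w.take i) = ((Icc 2 i).filter fun j => ent w j ≤ ent w (j-1)).card := by
  unfold wdes wDesSet
  rw [List.length_take, min_eq_left h]
  refine congrArg card (filter_congr ?_)
  intro j hj
  rw [mem_Icc] at hj
  rw [ent_take (by omega) (by omega), ent_take (by omega) (by omega)]

lemma wdes_zero_of {w : List ℕ} (h : w.length ≤ 1) : wdes w = 0 := by
  unfold wdes wDesSet
  rw [Finset.Icc_eq_empty (by omega), filter_empty, card_empty]

lemma wdes_take_one (w : List ℕ) : wdes (w.take 1) = 0 :=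
  wdes_zero_of (by rw [List.length_take]; exact min_le_left _ _)

lemma wdes_take_zero (w : List ℕ) : wdes (w.take 0) = 0 :=
  wdes_zero_of (by simp)

lemma wdes_take_succ {w : List ℕ} {i : ℕ} (h1 : 1 ≤ i) (h2 : i + 1 ≤ w.length) :
    wdes (w.take (i+1)) = wdes (w.take i) + if ent w (i+1) ≤ ent w i then 1 else 0 := by
  rw [wdes_take_eq h2, wdes_take_eq (by omega), card_step _ (by omega)]
  simp

lemma wdes_take_mono {w : List ℕ} {i j : ℕ} (h : i ≤ j) (hj : j ≤ w.length) :
    wdes (w.take i) ≤ wdes (w.take j) := by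
  rw [wdes_take_eq (le_trans h hj), wdes_take_eq hj]
  exact card_le_card (filter_subset_filter _ (Icc_subset_Icc_right h))

lemma wdes_take_le {w : List ℕ} {i : ℕ} (h : i ≤ w.length) :
    wdes (w.take i) ≤ i - 1 := by
  rw [wdes_take_eq h]
  refine le_trans (card_filter_le _ _) ?_
  rw [Nat.card_Icc]; omega

/-! ### ascCard of prefixes -/

lemma asc_take_eq {v : List ℕ} {i : ℕ} (h : i ≤ v.length) :
    ascCard 0 (v.take i)
      = ((Icc 1 i).filter fun j => j = 1 ∨ ent v (j-1) < ent v j).card := by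
  unfold ascCard ascSet
  rw [List.length_take, min_eq_left h]
  refine congrArg card (filter_congr ?_)
  intro j hj
  rw [mem_Icc] at hj
  by_cases hj1 : j = 1
  · subst hj1; simp
  · rw [ent_take (by omega) (by omega), ent_take (by omega) (by omega)]
    simp

lemma asc_take_zero (v : List ℕ) : ascCard 0 (v.take 0) = 0 := by
  rw [List.take_zero]
  unfold ascCard ascSet
  rw [show ([] : List ℕ).length = 0 from rfl, Finset.Icc_eq_empty (by omega),
    filter_empty, card_empty]

lemma asc_take_one {v : List ℕ} (h : 1 ≤ v.length) : ascCard 0 (v.take 1) = 1 := by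
  rw [asc_take_eq h, Finset.Icc_self, filter_singleton, if_pos (Or.inl rfl), card_singleton]

lemma asc_take_succ {v : List ℕ} {i : ℕ} (h1 : 1 ≤ i) (h2 : i + 1 ≤ v.length) :
    ascCard 0 (v.take (i+1))
      = ascCard 0 (v.take i) + if ent v i < ent v (i+1) then 1 else 0 := by
  rw [asc_take_eq h2, asc_take_eq (by omega), card_step _ (by omega)]
  congr 1
  simp [show i + 1 ≠ 1 by omega, show i ≠ 0 by omega, Nat.add_sub_cancel]

lemma asc_take_le {v : List ℕ} {i : ℕ} (h : i ≤ v.length) :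
    ascCard 0 (v.take i) ≤ i := by
  rw [asc_take_eq h]
  refine le_trans (card_filter_le _ _) ?_
  rw [Nat.card_Icc]; omega

/-! ### the maps -/

def Fm (w : List ℕ) : List ℕ :=
  (List.range w.length).map fun k => wdes (w.take (k+1)) + 2 - ent w (k+1)

def Gm (v : List ℕ) : List ℕ :=
  (List.range v.length).map fun k => ascCard 0 (v.take (k+1)) + 1 - ent v (k+1)

lemma length_Fm (w : List ℕ) : (Fm w).length = w.length := by
  simp [Fm]

lemma length_Gm (v : List ℕ) : (Gm v).length = v.length := by
  simp [Gm]

lemma ent_Fm {w : List ℕ} {i : ℕ} (h1 : 1 ≤ i) (h2 : i ≤ w.length) :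
    ent (Fm w) i = wdes (w.take i) + 2 - ent w i := by
  unfold ent
  rw [List.getD_eq_getElem _ _ (by rw [length_Fm]; omega)]
  simp only [Fm, List.getElem_map, List.getElem_range]
  rw [Nat.sub_add_cancel h1]
  rfl

lemma ent_Gm {v : List ℕ} {i : ℕ} (h1 : 1 ≤ i) (h2 : i ≤ v.length) :
    ent (Gm v) i = ascCard 0 (v.take i) + 1 - ent v i := by
  unfold ent
  rw [List.getD_eq_getElem _ _ (by rw [length_Gm]; omega)]
  simp only [Gm, List.getElem_map, List.getElem_range]
  rw [Nat.sub_add_cancel h1]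
  rfl

/-! ### forward direction -/

lemma ent_w_bounds {w : List ℕ} (hw : IsWDesSeq w) {i : ℕ} (h1 : 1 ≤ i)
    (h2 : i ≤ w.length) :
    1 ≤ ent w i ∧ ent w i ≤ 1 + wdes (w.take (i-1)) :=
  ⟨(hw.1 i (Finset.mem_Icc.mpr ⟨h1, h2⟩)).1, hw.2 i (Finset.mem_Icc.mpr ⟨h1, h2⟩)⟩

lemma ent_Fm_add {w : List ℕ} (hw : IsWDesSeq w) {i : ℕ} (h1 : 1 ≤ i)
    (h2 : i ≤ w.length) :
    ent (Fm w) i + ent w i = wdes (w.take i) + 2 := by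
  have hb := ent_w_bounds hw h1 h2
  have hm := wdes_take_mono (show i - 1 ≤ i by omega) h2
  rw [ent_Fm h1 h2]
  omega

lemma asc_Fm {w : List ℕ} (hw : IsWDesSeq w) :
    ∀ i, 1 ≤ i → i ≤ w.length →
      ascCard 0 ((Fm w).take i) = wdes (w.take i) + 1 := by
  intro i
  induction i with
  | zero => omega
  | succ i ih =>
    intro _ h2
    rcases Nat.eq_zero_or_pos i with rfl | hi
    · rw [asc_take_one (by rw [length_Fm]; omega), wdes_take_one]
    · have h2' : i ≤ w.length := by omega
      have e1 := ent_Fm_add hw hi h2'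
      have e2 := ent_Fm_add hw (by omega : (1:ℕ) ≤ i+1) h2
      have hD := wdes_take_succ hi h2
      have hK := asc_take_succ (v := Fm w) hi (by rw [length_Fm]; omega)
      rw [hK, ih hi h2']
      rcases le_or_gt (ent w (i+1)) (ent w i) with hc | hc
      · rw [if_pos hc] at hD
        rw [if_pos (show ent (Fm w) i < ent (Fm w) (i+1) by omega)]
        omega
      · rw [if_neg (by omega)] at hD
        rw [if_neg (show ¬ ent (Fm w) i < ent (Fm w) (i+1) by omega)]
        omega

lemma Fm_prim {w : List ℕ} (hw : IsWDesSeq w) : IsPrimAscSeq (Fm w) := by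
  refine ⟨⟨?_, ?_⟩, ?_⟩
  · -- endofunction
    refine isEndo_of_ent fun i h1 h2 => ?_
    rw [length_Fm] at h2
    have e := ent_Fm_add hw h1 h2
    have hb := ent_w_bounds hw h1 h2
    have hm := wdes_take_mono (show i - 1 ≤ i by omega) h2
    have hle := wdes_take_le h2
    omega
  · -- ascent bound
    intro i hi
    rw [mem_Icc, length_Fm] at hi
    obtain ⟨j, rfl⟩ : ∃ j, i = j + 1 := ⟨i - 1, by omega⟩
    rw [Nat.add_sub_cancel]
    rcases Nat.eq_zero_or_pos j with rfl | hj
    · simp only [Nat.zero_add]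
      have e := ent_Fm_add hw (by omega : (1:ℕ) ≤ 1) (by omega)
      have hb := ent_w_bounds hw (show (1:ℕ) ≤ 1 by omega) (by omega)
      rw [show (1:ℕ) - 1 = 0 from rfl, wdes_take_zero] at hb
      have hD1 := wdes_take_one w
      rw [asc_take_zero]
      omega
    · have h2 : j + 1 ≤ w.length := hi.2
      have hK := asc_Fm hw j hj (by omega)
      have e := ent_Fm_add hw (by omega : (1:ℕ) ≤ j+1) h2
      have hD := wdes_take_succ hj h2
      have ha := ent_w_bounds hw (show (1:ℕ) ≤ j+1 by omega) h2
      have hD' : wdes (w.take (j+1)) ≤ wdes (w.take j) + 1 := by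
        rw [hD]; split <;> omega
      rw [hK]
      omega
  · -- primitive
    intro i hi
    rw [mem_Icc, length_Fm] at hi
    have h2 : i + 1 ≤ w.length := by omega
    have e1 := ent_Fm_add hw (show 1 ≤ i from hi.1) (by omega)
    have e2 := ent_Fm_add hw (by omega : (1:ℕ) ≤ i+1) h2
    have hD := wdes_take_succ hi.1 h2
    intro heq
    rcases le_or_gt (ent w (i+1)) (ent w i) with hc | hc
    · rw [if_pos hc] at hD; omega
    · rw [if_neg (by omega)] at hD; omega

/-! ### backward direction -/

lemma ent_v_bounds {v : List ℕ} (hv : IsPrimAscSeq v) {i : ℕ} (h1 : 1 ≤ i)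
    (h2 : i ≤ v.length) :
    1 ≤ ent v i ∧ ent v i ≤ 1 + ascCard 0 (v.take (i-1)) :=
  ⟨(hv.1.1 (ent v i) (ent_mem h1 h2)).1, hv.1.2 i (Finset.mem_Icc.mpr ⟨h1, h2⟩)⟩

lemma b_le_asc {v : List ℕ} (hv : IsPrimAscSeq v) :
    ∀ i, 1 ≤ i → i ≤ v.length → ent v i ≤ ascCard 0 (v.take i) := by
  intro i
  induction i with
  | zero => omega
  | succ i ih =>
    intro _ h2
    rcases Nat.eq_zero_or_pos i with rfl | hi
    · simp only [Nat.zero_add]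
      have hb := ent_v_bounds hv (show (1:ℕ) ≤ 1 by omega) (by omega)
      rw [show (1:ℕ) - 1 = 0 from rfl, asc_take_zero] at hb
      rw [asc_take_one (by omega)]
      omega
    · have hb := ent_v_bounds hv (by omega : (1:ℕ) ≤ i+1) h2
      rw [Nat.add_sub_cancel] at hb
      have hK := asc_take_succ hi h2
      have ihh := ih hi (by omega)
      rcases lt_or_ge (ent v i) (ent v (i+1)) with hc | hc
      · rw [if_pos hc] at hK; omega
      · rw [if_neg (by omega)] at hK; omega

lemma ent_Gm_add {v : List ℕ} (hv : IsPrimAscSeq v) {i : ℕ} (h1 : 1 ≤ i)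
    (h2 : i ≤ v.length) :
    ent (Gm v) i + ent v i = ascCard 0 (v.take i) + 1 := by
  have hb := b_le_asc hv i h1 h2
  rw [ent_Gm h1 h2]
  omega

lemma wdes_Gm {v : List ℕ} (hv : IsPrimAscSeq v) :
    ∀ i, 1 ≤ i → i ≤ v.length →
      wdes ((Gm v).take i) + 1 = ascCard 0 (v.take i) := by
  intro i
  induction i with
  | zero => omega
  | succ i ih =>
    intro _ h2
    rcases Nat.eq_zero_or_pos i with rfl | hi
    · rw [wdes_take_one, asc_take_one (by omega)]
    · have e1 := ent_Gm_add hv hi (by omega)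
      have e2 := ent_Gm_add hv (by omega : (1:ℕ) ≤ i+1) h2
      have hK := asc_take_succ hi h2
      have hD := wdes_take_succ (w := Gm v) hi (by rw [length_Gm]; omega)
      have hne := hv.2 i (Finset.mem_Icc.mpr ⟨hi, by omega⟩)
      have ihh := ih hi (by omega)
      rw [hD]
      rcases lt_or_ge (ent v i) (ent v (i+1)) with hc | hc
      · rw [if_pos hc] at hK
        rw [if_pos (show ent (Gm v) (i+1) ≤ ent (Gm v) i by omega)]
        omega
      · rw [if_neg (by omega)] at hK
        rw [if_neg (show ¬ ent (Gm v) (i+1) ≤ ent (Gm v) i by omega)]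
        omega

lemma Gm_wdes {v : List ℕ} (hv : IsPrimAscSeq v) : IsWDesSeq (Gm v) := by
  constructor
  · -- inversion sequence
    intro i hi
    rw [mem_Icc, length_Gm] at hi
    have e := ent_Gm_add hv hi.1 hi.2
    have hb := b_le_asc hv i hi.1 hi.2
    have hb1 := (ent_v_bounds hv hi.1 hi.2).1
    have hle := asc_take_le hi.2
    omega
  · -- weak descent bound
    intro i hi
    rw [mem_Icc, length_Gm] at hi
    obtain ⟨j, rfl⟩ : ∃ j, i = j + 1 := ⟨i - 1, by omega⟩
    rw [Nat.add_sub_cancel]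
    rcases Nat.eq_zero_or_pos j with rfl | hj
    · simp only [Nat.zero_add]
      have e := ent_Gm_add hv (show (1:ℕ) ≤ 1 by omega) (by omega)
      have hb1 := (ent_v_bounds hv (show (1:ℕ) ≤ 1 by omega) (by omega)).1
      have hA1 := asc_take_one (v := v) (by omega)
      rw [List.take_zero, wdes_zero_of (by simp)]
      omega
    · have h2 : j + 1 ≤ v.length := hi.2
      have e2 := ent_Gm_add hv (by omega : (1:ℕ) ≤ j+1) h2
      have hK := asc_take_succ hj h2
      have hbj := (ent_v_bounds hv hj (by omega)).1
      have hbj1 := (ent_v_bounds hv (by omega : (1:ℕ) ≤ j+1) h2).1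
      have hw := wdes_Gm hv j hj (by omega)
      have hK' : ascCard 0 (v.take (j+1)) ≤ ascCard 0 (v.take j) + 1 := by
        rw [hK]; split <;> omega
      rcases lt_or_ge (ent v j) (ent v (j+1)) with hc | hc
      · rw [if_pos hc] at hK; omega
      · rw [if_neg (by omega)] at hK; omega

/-! ### round trips -/

lemma Gm_Fm {w : List ℕ} (hw : IsWDesSeq w) : Gm (Fm w) = w := by
  apply ext_ent (by rw [length_Gm, length_Fm])
  intro i h1 h2
  rw [length_Gm, length_Fm] at h2
  rw [ent_Gm h1 (by rw [length_Fm]; omega)]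
  have hK := asc_Fm hw i h1 h2
  have e := ent_Fm_add hw h1 h2
  omega

lemma Fm_Gm {v : List ℕ} (hv : IsPrimAscSeq v) : Fm (Gm v) = v := by
  apply ext_ent (by rw [length_Fm, length_Gm])
  intro i h1 h2
  rw [length_Fm, length_Gm] at h2
  rw [ent_Fm h1 (by rw [length_Gm]; omega)]
  have hD := wdes_Gm hv i h1 h2
  have e := ent_Gm_add hv h1 h2
  have hb := b_le_asc hv i h1 h2
  omega

end Stmt17

/-- for each `n ≥ 0`, the number of weak descent sequences of
length `n` equals the number of primitive ascent sequences of length `n`. -/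
theorem stmt17 (n : ℕ) :
    Nat.card {w : List ℕ // w.length = n ∧ IsWDesSeq w} =
    Nat.card {w : List ℕ // w.length = n ∧ IsPrimAscSeq w} := by
  refine Nat.card_congr
    { toFun := fun p => ⟨Stmt17.Fm p.1, by rw [Stmt17.length_Fm]; exact p.2.1,
        Stmt17.Fm_prim p.2.2⟩
      invFun := fun p => ⟨Stmt17.Gm p.1, by rw [Stmt17.length_Gm]; exact p.2.1,
        Stmt17.Gm_wdes p.2.2⟩
      left_inv := fun p => Subtype.ext (Stmt17.Gm_Fm p.2.2)
      right_inv := fun p => Subtype.ext (Stmt17.Fm_Gm p.2.2) }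
end

section
/- For all d ≥ 0 and n ≥ 0, the map burget is injective on the set Â_{d,n} of modified d-ascent sequences of length n. -/
namespace S18

/-! ### Basic entry lemmas -/

lemma ent_append_of_le (w : List ℕ) (b : ℕ) {i : ℕ} (h1 : 1 ≤ i) (h2 : i ≤ w.length) :
    ent (w ++ [b]) i = ent w i := by
  unfold ent
  exact List.getD_append _ _ _ _ (by omega)

lemma ent_append_last (w : List ℕ) (b : ℕ) : ent (w ++ [b]) (w.length + 1) = b := by
  unfold ent
  rw [show w.length + 1 - 1 = w.length by omega, List.getD_append_right _ _ _ _ (le_refl _)]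
  simp

lemma ent_eq_getElem (w : List ℕ) {i : ℕ} (h1 : 1 ≤ i) (h2 : i ≤ w.length) :
    ent w i = w[i-1]'(by omega) := List.getD_eq_getElem _ _ _

lemma ent_mem (w : List ℕ) {i : ℕ} (h1 : 1 ≤ i) (h2 : i ≤ w.length) : ent w i ∈ w := by
  rw [ent_eq_getElem w h1 h2]; exact List.getElem_mem _

lemma ent_take (w : List ℕ) {k i : ℕ} (h1 : 1 ≤ i) (h2 : i ≤ k) :
    ent (w.take k) i = ent w i := by
  unfold ent
  by_cases h : i - 1 < (w.take k).length
  · rw [List.getD_eq_getElem _ _ h, List.getD_eq_getElem _ _ (by simp at h ⊢; omega),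
      List.getElem_take]
  · have hlen : (w.take k).length = min k w.length := by simp
    have hw : ¬ (i - 1 < w.length) := by omega
    rw [List.getD_eq_default _ _ (by omega), List.getD_eq_default _ _ (by omega)]

lemma length_Mstep (w : List ℕ) (j : ℕ) : (Mstep w j).length = w.length := by
  simp [Mstep]

lemma length_foldl_Mstep (js : List ℕ) (w : List ℕ) :
    (js.foldl Mstep w).length = w.length := by
  induction js generalizing w with
  | nil => rfl
  | cons j t ih => simp [List.foldl_cons, ih, length_Mstep]

lemma length_hatd (d : ℕ) (w : List ℕ) : (hatd d w).length = w.length :=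
  length_foldl_Mstep _ _

lemma ent_Mstep_of_ge (w : List ℕ) {j i : ℕ} (h : j ≤ i) :
    ent (Mstep w j) i = ent w i := by
  unfold ent Mstep
  by_cases hi : i - 1 < w.length
  · rw [List.getD_eq_getElem _ _ (by simpa using hi), List.getD_eq_getElem _ _ hi,
      List.getElem_mapIdx]
    rw [if_neg]
    rintro ⟨h1, -⟩
    omega
  · rw [List.getD_eq_default _ _ (by simpa using hi), List.getD_eq_default _ _ (by omega)]

lemma ent_foldl_Mstep_of_ge (js : List ℕ) (w : List ℕ) {i : ℕ} (h : ∀ j ∈ js, j ≤ i) :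
    ent (js.foldl Mstep w) i = ent w i := by
  induction js generalizing w with
  | nil => rfl
  | cons j t ih =>
      rw [List.foldl_cons, ih _ (fun j hj => h j (List.mem_cons_of_mem _ hj)),
        ent_Mstep_of_ge _ (h j (List.mem_cons_self))]

/-! ### ascSet lemmas -/

lemma mem_ascSet {d : ℕ} {w : List ℕ} {i : ℕ} :
    i ∈ ascSet d w ↔ (1 ≤ i ∧ i ≤ w.length) ∧ (i = 1 ∨ ent w (i - 1) < ent w i + d) := by
  simp only [ascSet, Finset.mem_filter, Finset.mem_Icc]

lemma ascSet_le_length {d : ℕ} {w : List ℕ} {i : ℕ} (h : i ∈ ascSet d w) :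
    1 ≤ i ∧ i ≤ w.length := (mem_ascSet.mp h).1

lemma ascCard_le_length (d : ℕ) (w : List ℕ) : ascCard d w ≤ w.length := by
  unfold ascCard
  calc (ascSet d w).card ≤ (Finset.Icc 1 w.length).card :=
        Finset.card_le_card (Finset.filter_subset _ _)
    _ = w.length := by rw [Nat.card_Icc]; omega

lemma ascSet_take (d : ℕ) (w : List ℕ) {k : ℕ} (hk : k ≤ w.length) :
    ascSet d (w.take k) = (ascSet d w).filter (· ≤ k) := by
  ext i
  simp only [mem_ascSet, Finset.mem_filter]
  have hlen : (w.take k).length = min k w.length := by simp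
  constructor
  · rintro ⟨⟨h1, h2⟩, h3⟩
    have h2' : i ≤ k := by omega
    by_cases hi1 : i = 1
    · exact ⟨⟨⟨h1, by omega⟩, Or.inl hi1⟩, h2'⟩
    refine ⟨⟨⟨h1, by omega⟩, ?_⟩, h2'⟩
    rcases h3 with h3 | h3
    · exact Or.inl h3
    · right
      rwa [ent_take w (by omega) (by omega), ent_take w h1 h2'] at h3
  · rintro ⟨⟨⟨h1, h2⟩, h3⟩, h4⟩
    by_cases hi1 : i = 1
    · exact ⟨⟨h1, by omega⟩, Or.inl hi1⟩
    refine ⟨⟨h1, by omega⟩, ?_⟩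
    rcases h3 with h3 | h3
    · exact Or.inl h3
    · right
      rwa [ent_take w (by omega) (by omega), ent_take w h1 h4]

end S18
namespace S18

/-! ### Mstep on appended lists -/

lemma Mstep_append (w : List ℕ) (a : ℕ) {j : ℕ} (h1 : 1 ≤ j) (h2 : j ≤ w.length) :
    Mstep (w ++ [a]) j = Mstep w j ++ [a] := by
  unfold Mstep
  rw [ent_append_of_le w a h1 h2, List.mapIdx_append]
  congr 1
  simp only [List.mapIdx, List.mapIdx.go, List.length_nil]
  simp [show ¬ (w.length + 1 < j) by omega]

lemma Mstep_last (g : List ℕ) (a : ℕ) :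
    Mstep (g ++ [a]) (g.length + 1) = plus g a ++ [a] := by
  unfold Mstep plus
  rw [ent_append_last, List.mapIdx_append]
  congr 1
  · apply List.ext_getElem (by simp)
    intro n h1 h2
    have hn : n < g.length := by simpa using h1
    simp only [List.getElem_mapIdx, List.getElem_map]
    have hlt : n + 1 < g.length + 1 := by omega
    by_cases hc : a ≤ g[n] <;> simp [hlt, hc]
  · simp [show ¬ (0 + g.length + 1 < g.length + 1) by omega]

lemma foldl_Mstep_append (js : List ℕ) (w : List ℕ) (a : ℕ)
    (h : ∀ j ∈ js, 1 ≤ j ∧ j ≤ w.length) :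
    js.foldl Mstep (w ++ [a]) = js.foldl Mstep w ++ [a] := by
  induction js generalizing w with
  | nil => rfl
  | cons j t ih =>
      have hj := h j (List.mem_cons_self)
      rw [List.foldl_cons, Mstep_append w a hj.1 hj.2, List.foldl_cons, ih]
      intro j' hj'
      have := h j' (List.mem_cons_of_mem _ hj')
      rwa [length_Mstep]

/-! ### sorting an inserted top element -/

lemma sort_insert_top {S : Finset ℕ} {N : ℕ} (h : ∀ b ∈ S, b < N) :
    (insert N S).sort (· ≤ ·) = S.sort (· ≤ ·) ++ [N] := by
  have hN : N ∉ S := fun hc => lt_irrefl N (h N hc)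
  have hperm : ((insert N S).sort (· ≤ ·)).Perm (S.sort (· ≤ ·) ++ [N]) :=
    (Finset.sort_perm_toList _ _).trans ((Finset.toList_insert hN).trans
      (((Finset.sort_perm_toList S (· ≤ ·)).symm.cons N).trans
        (List.perm_append_singleton _ _).symm))
  refine List.Perm.eq_of_pairwise' (Finset.pairwise_sort _ _) ?_ hperm
  rw [List.pairwise_append]
  refine ⟨Finset.pairwise_sort _ _, List.pairwise_singleton _ _, ?_⟩
  intro x hx b hb
  rw [List.mem_singleton] at hb
  subst hb
  exact le_of_lt (h x (by rwa [Finset.mem_sort] at hx))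

/-! ### ascSet of appended lists -/

lemma ascSet_append_pos {d : ℕ} {x : List ℕ} {a : ℕ}
    (hc : x = [] ∨ ent x x.length < a + d) :
    ascSet d (x ++ [a]) = insert (x.length + 1) (ascSet d x) := by
  ext i
  simp only [mem_ascSet, Finset.mem_insert]
  constructor
  · rintro ⟨⟨h1, h2⟩, h3⟩
    rw [List.length_append, List.length_singleton] at h2
    by_cases hi : i = x.length + 1
    · exact Or.inl hi
    · right
      refine ⟨⟨h1, by omega⟩, ?_⟩
      by_cases hi1 : i = 1
      · exact Or.inl hi1
      rcases h3 with h3 | h3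
      · exact Or.inl h3
      · right
        rwa [ent_append_of_le x a (by omega) (by omega),
          ent_append_of_le x a h1 (by omega)] at h3
  · rintro (rfl | ⟨⟨h1, h2⟩, h3⟩)
    · refine ⟨⟨by omega, by simp⟩, ?_⟩
      by_cases hx : x = []
      · subst hx; exact Or.inl rfl
      rcases hc with hc | hc
      · exact absurd hc hx
      · right
        have hl : 1 ≤ x.length := List.length_pos_iff.mpr hx
        rw [show x.length + 1 - 1 = x.length by omega,
          ent_append_of_le x a (by omega) (by omega), ent_append_last]
        exact hc
    · refine ⟨⟨h1, by simp; omega⟩, ?_⟩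
      by_cases hi1 : i = 1
      · exact Or.inl hi1
      rcases h3 with h3 | h3
      · exact Or.inl h3
      · right
        rwa [ent_append_of_le x a (by omega) (by omega),
          ent_append_of_le x a h1 (by omega)]

lemma ascSet_append_neg {d : ℕ} {x : List ℕ} {a : ℕ}
    (hc : ¬ (x = [] ∨ ent x x.length < a + d)) :
    ascSet d (x ++ [a]) = ascSet d x := by
  push_neg at hc
  obtain ⟨hne, hent⟩ := hc
  have hl : 1 ≤ x.length := List.length_pos_iff.mpr hne
  ext i
  simp only [mem_ascSet]
  constructor
  · rintro ⟨⟨h1, h2⟩, h3⟩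
    rw [List.length_append, List.length_singleton] at h2
    by_cases hi : i = x.length + 1
    · exfalso
      subst hi
      rcases h3 with h3 | h3
      · omega
      · rw [show x.length + 1 - 1 = x.length by omega,
          ent_append_of_le x a (by omega) (by omega), ent_append_last] at h3
        omega
    · refine ⟨⟨h1, by omega⟩, ?_⟩
      by_cases hi1 : i = 1
      · exact Or.inl hi1
      rcases h3 with h3 | h3
      · exact Or.inl h3
      · right
        rwa [ent_append_of_le x a (by omega) (by omega),
          ent_append_of_le x a h1 (by omega)] at h3
  · rintro ⟨⟨h1, h2⟩, h3⟩
    refine ⟨⟨h1, by simp; omega⟩, ?_⟩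
    by_cases hi1 : i = 1
    · exact Or.inl hi1
    rcases h3 with h3 | h3
    · exact Or.inl h3
    · right
      rwa [ent_append_of_le x a (by omega) (by omega),
        ent_append_of_le x a h1 (by omega)]

lemma not_mem_ascSet_top (d : ℕ) (x : List ℕ) : x.length + 1 ∉ ascSet d x := by
  intro h
  have := (mem_ascSet.mp h).1
  omega

lemma ascCard_append_pos {d : ℕ} {x : List ℕ} {a : ℕ}
    (hc : x = [] ∨ ent x x.length < a + d) :
    ascCard d (x ++ [a]) = ascCard d x + 1 := by
  unfold ascCard
  rw [ascSet_append_pos hc, Finset.card_insert_of_notMem (not_mem_ascSet_top d x)]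

lemma ascCard_append_neg {d : ℕ} {x : List ℕ} {a : ℕ}
    (hc : ¬ (x = [] ∨ ent x x.length < a + d)) :
    ascCard d (x ++ [a]) = ascCard d x := by
  unfold ascCard
  rw [ascSet_append_neg hc]

/-! ### the recursion for hatd -/

lemma hatd_append_pos {d : ℕ} {x : List ℕ} {a : ℕ}
    (hc : x = [] ∨ ent x x.length < a + d) :
    hatd d (x ++ [a]) = plus (hatd d x) a ++ [a] := by
  unfold hatd
  rw [ascSet_append_pos hc,
    sort_insert_top (fun b hb => by have := (mem_ascSet.mp hb).1; omega),
    List.foldl_append, List.foldl_cons, List.foldl_nil,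
    foldl_Mstep_append _ _ _ (fun j hj => by
      rw [Finset.mem_sort] at hj; exact ascSet_le_length hj)]
  have hlen : (((ascSet d x).sort (· ≤ ·)).foldl Mstep x).length = x.length :=
    length_foldl_Mstep _ _
  have hms := Mstep_last (((ascSet d x).sort (· ≤ ·)).foldl Mstep x) a
  rw [hlen] at hms
  exact hms

lemma hatd_append_neg {d : ℕ} {x : List ℕ} {a : ℕ}
    (hc : ¬ (x = [] ∨ ent x x.length < a + d)) :
    hatd d (x ++ [a]) = hatd d x ++ [a] := by
  unfold hatd
  rw [ascSet_append_neg hc,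
    foldl_Mstep_append _ _ _ (fun j hj => by
      rw [Finset.mem_sort] at hj; exact ascSet_le_length hj)]

end S18
namespace S18

/-! ### prefixes of d-ascent sequences -/

lemma dasc_ent_le {d : ℕ} {x : List ℕ} (h : IsDAscSeq d x) {i : ℕ}
    (h1 : 1 ≤ i) (h2 : i ≤ x.length) :
    ent x i ≤ 1 + ascCard d (x.take (i - 1)) :=
  h.2 i (Finset.mem_Icc.mpr ⟨h1, h2⟩)

lemma dasc_ent_le_idx {d : ℕ} {x : List ℕ} (h : IsDAscSeq d x) {i : ℕ}
    (h1 : 1 ≤ i) (h2 : i ≤ x.length) : ent x i ≤ i := by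
  have := dasc_ent_le h h1 h2
  have h3 : ascCard d (x.take (i - 1)) ≤ (x.take (i-1)).length := ascCard_le_length _ _
  have h4 : (x.take (i-1)).length ≤ i - 1 := by simp
  omega

lemma dasc_take {d : ℕ} {x : List ℕ} (h : IsDAscSeq d x) (k : ℕ) :
    IsDAscSeq d (x.take k) := by
  rcases le_or_gt x.length k with hk | hk
  · rwa [List.take_of_length_le hk]
  constructor
  · intro u hu
    obtain ⟨n, hn, rfl⟩ := List.mem_iff_getElem.mp hu
    have hn' : n < x.length := by simp at hn; omega
    have hmem : (x.take k)[n] = x[n] := List.getElem_take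
    constructor
    · rw [hmem]; exact (h.1 _ (List.getElem_mem _)).1
    · have he : (x.take k)[n] = ent x (n+1) := by
        rw [hmem, ent_eq_getElem x (by omega) (by omega)]
        congr 1
      rw [he]
      have := dasc_ent_le_idx h (i := n+1) (by omega) (by omega)
      have hlen : (x.take k).length = k := by simp; omega
      simp at hn
      omega
  · intro i hi
    rw [Finset.mem_Icc] at hi
    have hlen : (x.take k).length = k := by simp; omega
    rw [hlen] at hi
    rw [ent_take x hi.1 hi.2, List.take_take]
    rw [show min (i-1) k = i - 1 by omega]
    exact dasc_ent_le h hi.1 (by omega)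

/-! ### counting ascents of prefixes -/

lemma card_filter_le_succ (S : Finset ℕ) (k : ℕ) :
    (S.filter (· ≤ k + 1)).card
      = (S.filter (· ≤ k)).card + if k + 1 ∈ S then 1 else 0 := by
  by_cases h : k + 1 ∈ S
  · rw [if_pos h]
    have : S.filter (· ≤ k + 1) = insert (k+1) (S.filter (· ≤ k)) := by
      ext x
      simp only [Finset.mem_filter, Finset.mem_insert]
      constructor
      · rintro ⟨hx, hxle⟩
        by_cases hxe : x = k + 1
        · exact Or.inl hxe
        · exact Or.inr ⟨hx, by omega⟩
      · rintro (rfl | ⟨hx, hxle⟩)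
        · exact ⟨h, le_refl _⟩
        · exact ⟨hx, by omega⟩
    rw [this, Finset.card_insert_of_notMem (by simp)]
  · rw [if_neg h]
    congr 1
    ext x
    simp only [Finset.mem_filter]
    constructor
    · rintro ⟨hx, hxle⟩
      refine ⟨hx, ?_⟩
      by_cases hxe : x = k + 1
      · exact absurd (hxe ▸ hx) h
      · omega
    · rintro ⟨hx, hxle⟩
      exact ⟨hx, by omega⟩

lemma ascCard_take_succ (d : ℕ) (w : List ℕ) {k : ℕ} (hk : k + 1 ≤ w.length) :
    ascCard d (w.take (k+1))
      = ascCard d (w.take k) + if k + 1 ∈ ascSet d w then 1 else 0 := by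
  unfold ascCard
  rw [ascSet_take d w hk, ascSet_take d w (by omega)]
  exact card_filter_le_succ _ _

lemma ascCard_take_mono (d : ℕ) (w : List ℕ) {k l : ℕ} (h : k ≤ l) :
    ascCard d (w.take k) ≤ ascCard d (w.take l) := by
  unfold ascCard
  rcases le_or_gt l w.length with hl | hl
  · rw [ascSet_take d w (by omega), ascSet_take d w hl]
    apply Finset.card_le_card
    intro x
    simp only [Finset.mem_filter]
    rintro ⟨hx, hxk⟩
    exact ⟨hx, by omega⟩
  · rcases le_or_gt k w.length with hk | hk
    · rw [List.take_of_length_le (le_of_lt hl), ascSet_take d w hk]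
      exact Finset.card_le_card (Finset.filter_subset _ _)
    · rw [List.take_of_length_le (le_of_lt hl), List.take_of_length_le (le_of_lt hk)]

/-! ### the key bound at non-ascents -/

lemma nonascent_le (d : ℕ) {x : List ℕ} (h : IsDAscSeq d x) :
    ∀ i, 2 ≤ i → i ≤ x.length → ¬ (ent x (i-1) < ent x i + d) →
      ent x i ≤ ascCard d (x.take (i-1)) := by
  intro i
  induction i using Nat.strong_induction_on with
  | _ i IH =>
    intro h2 hlen hna
    have hle : ent x i + d ≤ ent x (i-1) := by omega
    have hprev : ent x (i-1) ≤ 1 + ascCard d (x.take (i-2)) := by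
      have := dasc_ent_le h (i := i-1) (by omega) (by omega)
      rwa [show i - 1 - 1 = i - 2 by omega] at this
    have hsucc : ascCard d (x.take (i-1))
        = ascCard d (x.take (i-2)) + if (i-2) + 1 ∈ ascSet d x then 1 else 0 := by
      have e : i - 1 = (i - 2) + 1 := by omega
      rw [e]
      exact ascCard_take_succ d x (by omega)
    rw [show (i-2) + 1 = i - 1 by omega] at hsucc
    by_cases hasc : i - 1 ∈ ascSet d x
    · rw [if_pos hasc] at hsucc
      omega
    · rw [if_neg hasc] at hsucc
      have hi3 : 3 ≤ i := by
        by_contra hcon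
        have hi2 : i = 2 := by omega
        apply hasc
        rw [hi2]
        exact mem_ascSet.mpr ⟨⟨le_refl _, by omega⟩, Or.inl rfl⟩
      have hna' : ¬ (ent x (i-1-1) < ent x (i-1) + d) := by
        intro hcon
        exact hasc (mem_ascSet.mpr ⟨⟨by omega, by omega⟩, Or.inr hcon⟩)
      have := IH (i-1) (by omega) (by omega) (by omega) hna'
      rw [show i - 1 - 1 = i - 2 by omega] at this
      omega

/-! ### maxEnt lemmas -/

lemma le_maxEnt {w : List ℕ} {v : ℕ} (h : v ∈ w) : v ≤ maxEnt w := by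
  induction w with
  | nil => cases h
  | cons a t ih =>
      rcases List.mem_cons.mp h with rfl | h
      · exact le_max_left _ _
      · exact le_trans (ih h) (le_max_right _ _)

lemma maxEnt_le {w : List ℕ} {b : ℕ} (h : ∀ v ∈ w, v ≤ b) : maxEnt w ≤ b := by
  induction w with
  | nil => exact Nat.zero_le _
  | cons a t ih =>
      exact max_le (h a (List.mem_cons_self))
        (ih fun v hv => h v (List.mem_cons_of_mem _ hv))

/-! ### the Cayley property of hatd -/

lemma hat_spec (d : ℕ) (x : List ℕ) (hx : IsDAscSeq d x) :
    (∀ v, v ∈ hatd d x ↔ 1 ≤ v ∧ v ≤ ascCard d x)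
      ∧ maxEnt (hatd d x) = ascCard d x := by
  induction x using List.reverseRecOn with
  | nil =>
      have h1 : hatd d ([] : List ℕ) = [] := by
        have : (hatd d ([] : List ℕ)).length = 0 := length_hatd d []
        exact List.length_eq_zero_iff.mp this
      have h2 : ascCard d ([] : List ℕ) = 0 := by
        unfold ascCard ascSet
        simp
      rw [h1, h2]
      constructor
      · intro v; simp; omega
      · simp [maxEnt]
  | append_singleton x' a ih =>
      have hx' : IsDAscSeq d x' := by
        have := dasc_take hx x'.length
        rwa [List.take_left] at this
      obtain ⟨hmem, hmax⟩ := ih hx'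
      set m := ascCard d x' with hm
      have ha1 : 1 ≤ a := (hx.1 a (by simp)).1
      have haN : ent (x' ++ [a]) (x'.length + 1) = a := ent_append_last _ _
      have hale : a ≤ 1 + m := by
        have := dasc_ent_le hx (i := x'.length + 1) (by omega) (by simp)
        rwa [haN, show x'.length + 1 - 1 = x'.length by omega, List.take_left] at this
      by_cases hc : (x' = [] ∨ ent x' x'.length < a + d)
      · rw [hatd_append_pos hc, ascCard_append_pos hc]
        have char : ∀ v, v ∈ plus (hatd d x') a ++ [a] ↔ 1 ≤ v ∧ v ≤ m + 1 := by
          intro v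
          simp only [List.mem_append, List.mem_singleton, plus, List.mem_map]
          constructor
          · rintro (⟨u, hu, rfl⟩ | rfl)
            · have := (hmem u).mp hu
              split <;> omega
            · omega
          · rintro ⟨hv1, hv2⟩
            rcases lt_trichotomy v a with hva | hva | hva
            · left
              exact ⟨v, (hmem v).mpr ⟨hv1, by omega⟩, by rw [if_neg (by omega)]⟩
            · right; exact hva
            · left
              exact ⟨v - 1, (hmem (v-1)).mpr ⟨by omega, by omega⟩,
                by rw [if_pos (by omega)]; omega⟩
        refine ⟨char, ?_⟩
        refine le_antisymm (maxEnt_le fun v hv => ((char v).mp hv).2) ?_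
        exact le_maxEnt ((char (m+1)).mpr ⟨by omega, le_refl _⟩)
      · rw [hatd_append_neg hc, ascCard_append_neg hc]
        have hne : x' ≠ [] := fun he => hc (Or.inl he)
        have hl1 : 1 ≤ x'.length := List.length_pos_iff.mpr hne
        have ham : a ≤ m := by
          have hna : ¬ (ent (x' ++ [a]) (x'.length + 1 - 1)
              < ent (x' ++ [a]) (x'.length + 1) + d) := by
            rw [haN, show x'.length + 1 - 1 = x'.length by omega,
              ent_append_of_le x' a (by omega) (le_refl _)]
            intro hcon
            exact hc (Or.inr hcon)
          have := nonascent_le d hx (x'.length + 1) (by omega) (by simp) hna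
          rwa [haN, show x'.length + 1 - 1 = x'.length by omega, List.take_left] at this
        have h1m : 1 ≤ m := by
          rw [hm]
          unfold ascCard
          refine Finset.card_pos.mpr ⟨1, mem_ascSet.mpr ⟨⟨le_refl _, hl1⟩, Or.inl rfl⟩⟩
        have char : ∀ v, v ∈ hatd d x' ++ [a] ↔ 1 ≤ v ∧ v ≤ m := by
          intro v
          simp only [List.mem_append, List.mem_singleton]
          constructor
          · rintro (hv | rfl)
            · exact (hmem v).mp hv
            · exact ⟨ha1, ham⟩
          · intro hv
            exact Or.inl ((hmem v).mpr hv)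
        refine ⟨char, ?_⟩
        refine le_antisymm (maxEnt_le fun v hv => ((char v).mp hv).2) ?_
        exact le_maxEnt ((char m).mpr ⟨h1m, le_refl _⟩)

end S18
namespace S18

/-! ### the Burge order -/

def br (w : List ℕ) (i j : ℕ) : Prop :=
  ent w i < ent w j ∨ (ent w i = ent w j ∧ j ≤ i)

instance brDec (w : List ℕ) : DecidableRel (br w) := fun i j => by
  unfold br; infer_instance

instance (w : List ℕ) : IsTotal ℕ (br w) := ⟨by intro a b; unfold br; omega⟩
instance (w : List ℕ) : IsTrans ℕ (br w) :=
  ⟨by intro a b c hab hbc; unfold br at *; omega⟩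
instance (w : List ℕ) : IsAntisymm ℕ (br w) :=
  ⟨by intro a b hab hba; unfold br at *; omega⟩

lemma bInsert_eq (w : List ℕ) (i : ℕ) : ∀ l, bInsert w i l = List.orderedInsert (br w) i l
  | [] => rfl
  | j :: t => by
      unfold bInsert List.orderedInsert
      by_cases h : ent w i < ent w j ∨ (ent w i = ent w j ∧ j ≤ i)
      · rw [if_pos h, if_pos (show br w i j from h)]
      · rw [if_neg h, if_neg (show ¬ br w i j from h), bInsert_eq w i t]

def posList (n : ℕ) : List ℕ := (List.range n).map (· + 1)

lemma length_posList (n : ℕ) : (posList n).length = n := by simp [posList]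

lemma mem_posList {n i : ℕ} : i ∈ posList n ↔ 1 ≤ i ∧ i ≤ n := by
  simp only [posList, List.mem_map, List.mem_range]
  constructor
  · rintro ⟨k, hk, rfl⟩; omega
  · rintro ⟨h1, h2⟩; exact ⟨i - 1, by omega, by omega⟩

lemma posList_succ (n : ℕ) : posList (n + 1) = posList n ++ [n + 1] := by
  simp [posList, List.range_succ]

lemma burget_eq (w : List ℕ) :
    burget w = List.insertionSort (br w) (posList w.length) := by
  unfold burget posList
  generalize (List.range w.length).map (· + 1) = l
  induction l with
  | nil => rfl
  | cons a t ih => rw [List.foldr_cons, ih, bInsert_eq]; rfl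

lemma burget_perm (w : List ℕ) : (burget w).Perm (posList w.length) := by
  rw [burget_eq]; exact List.perm_insertionSort _ _

lemma burget_sorted (w : List ℕ) : List.Pairwise (br w) (burget w) := by
  rw [burget_eq]; exact List.pairwise_insertionSort _ _

lemma length_burget (w : List ℕ) : (burget w).length = w.length := by
  rw [(burget_perm w).length_eq, length_posList]

lemma mem_burget {w : List ℕ} {i : ℕ} : i ∈ burget w ↔ 1 ≤ i ∧ i ≤ w.length := by
  rw [(burget_perm w).mem_iff, mem_posList]

/-! ### counting entries below a threshold -/

lemma map_ent_posList (w : List ℕ) : (posList w.length).map (fun i => ent w i) = w := by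
  apply List.ext_getElem (by simp [posList])
  intro n h1 h2
  simp only [posList, List.map_map, List.getElem_map, List.getElem_range, Function.comp]
  rw [ent_eq_getElem w (by omega) (by simpa [posList] using h1)]
  congr 1

lemma countP_pos_ent (w : List ℕ) (p : ℕ → Bool) :
    (posList w.length).countP (fun i => p (ent w i)) = w.countP p := by
  conv_rhs => rw [← map_ent_posList w]
  rw [List.countP_map]
  rfl

/-! ### splitting a sorted list at a threshold value -/

lemma sorted_split (f : ℕ → ℕ) (a : ℕ) :
    ∀ (q : List ℕ), q.Pairwise (fun i j => f i ≤ f j) →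
    (∀ i ∈ q.take (q.countP fun i => decide (f i < a)), f i < a) ∧
    (∀ j ∈ q.drop (q.countP fun i => decide (f i < a)), a ≤ f j) := by
  intro q
  induction q with
  | nil => simp
  | cons x t ih =>
      intro hp
      obtain ⟨hx, ht⟩ := List.pairwise_cons.mp hp
      by_cases hfx : f x < a
      · rw [List.countP_cons_of_pos (by simpa using hfx)]
        rw [List.take_succ_cons, List.drop_succ_cons]
        refine ⟨?_, (ih ht).2⟩
        intro i hi
        rcases List.mem_cons.mp hi with rfl | hi
        · exact hfx
        · exact (ih ht).1 i hi
      · have hall : ∀ j ∈ t, a ≤ f j := fun j hj => le_trans (by omega) (hx j hj)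
        have hc0 : (x :: t).countP (fun i => decide (f i < a)) = 0 := by
          rw [List.countP_eq_zero]
          intro j hj
          rcases List.mem_cons.mp hj with rfl | hj
          · simpa using hfx
          · have := hall j hj; simp; omega
        rw [hc0, List.take_zero, List.drop_zero]
        refine ⟨by simp, ?_⟩
        intro j hj
        rcases List.mem_cons.mp hj with rfl | hj
        · omega
        · exact hall j hj

/-! ### burget of a one-element extension -/

lemma burget_concat (g' : List ℕ) (a : ℕ) (g : List ℕ)
    (hlen : g.length = g'.length + 1)
    (hN : ent g (g'.length + 1) = a)
    (hlt : ∀ i, 1 ≤ i → i ≤ g'.length → (ent g' i < a ↔ ent g i < a))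
    (hbr : ∀ i j, 1 ≤ i → i ≤ g'.length → 1 ≤ j → j ≤ g'.length → br g' i j → br g i j) :
    burget g = (burget g').take (g'.countP fun v => decide (v < a))
      ++ (g'.length + 1) :: (burget g').drop (g'.countP fun v => decide (v < a)) := by
  set L := g'.length with hL
  set N := L + 1 with hNdef
  set q := burget g' with hq
  set c := g'.countP (fun v => decide (v < a)) with hc
  have hqmem : ∀ i ∈ q, 1 ≤ i ∧ i ≤ L := fun i hi => mem_burget.mp hi
  have hcq : q.countP (fun i => decide (ent g' i < a)) = c := by
    rw [(burget_perm g').countP_eq, countP_pos_ent g' (fun v => decide (v < a))]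
  have hqsorted : q.Pairwise (br g') := burget_sorted g'
  have hsplit := sorted_split (fun i => ent g' i) a q
    (hqsorted.imp (fun {i j} h => by unfold br at h; show ent g' i ≤ ent g' j; omega))
  rw [hcq] at hsplit
  obtain ⟨htake0, hdrop0⟩ := hsplit
  have htake : ∀ i ∈ q.take c, ent g' i < a := htake0
  have hdrop : ∀ j ∈ q.drop c, a ≤ ent g' j := hdrop0
  apply (fun h1 h2 h3 => List.Perm.eq_of_pairwise' (r := br g) h2 h3 h1)
  · have h1 : (burget g).Perm (posList L ++ [N]) := by
      have := burget_perm g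
      rwa [hlen, hNdef, posList_succ] at this
    have h2 : (q.take c ++ N :: q.drop c).Perm (posList L ++ [N]) := by
      refine List.Perm.trans List.perm_middle ?_
      rw [List.take_append_drop]
      exact ((burget_perm g').cons N).trans (List.perm_append_singleton _ _).symm
    exact h1.trans h2.symm
  · exact burget_sorted g
  · rw [List.pairwise_append]
    have htake_sub : ∀ i ∈ q.take c, i ∈ q := fun i hi => List.mem_of_mem_take hi
    have hdrop_sub : ∀ i ∈ q.drop c, i ∈ q := fun i hi => List.mem_of_mem_drop hi
    have hbrN : ∀ j ∈ q.drop c, br g N j := by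
      intro j hj
      have hjq := hqmem j (hdrop_sub j hj)
      have haj : a ≤ ent g j := by
        have := hdrop j hj
        have := (hlt j hjq.1 hjq.2)
        omega
      rcases Nat.eq_or_lt_of_le haj with he | hlt'
      · exact Or.inr ⟨by rw [hN, he], by omega⟩
      · exact Or.inl (by rw [hN]; exact hlt')
    have hbrT : ∀ i ∈ q.take c, ent g i < a := by
      intro i hi
      have hiq := hqmem i (htake_sub i hi)
      have := htake i hi
      have := hlt i hiq.1 hiq.2
      omega
    refine ⟨?_, ?_, ?_⟩
    · -- take part pairwise
      refine ((hqsorted.sublist (List.take_sublist _ _)).imp_of_mem ?_)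
      intro i j hi hj hij
      have h1 := hqmem i (htake_sub i hi)
      have h2 := hqmem j (htake_sub j hj)
      exact hbr i j h1.1 h1.2 h2.1 h2.2 hij
    · -- N :: drop part pairwise
      rw [List.pairwise_cons]
      refine ⟨hbrN, ?_⟩
      refine ((hqsorted.sublist (List.drop_sublist _ _)).imp_of_mem ?_)
      intro i j hi hj hij
      have h1 := hqmem i (hdrop_sub i hi)
      have h2 := hqmem j (hdrop_sub j hj)
      exact hbr i j h1.1 h1.2 h2.1 h2.2 hij
    · -- cross relations
      intro i hi j hj
      rcases List.mem_cons.mp hj with rfl | hj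
      · exact Or.inl (by rw [hN]; exact hbrT i hi)
      · -- i in take, j in drop: from sortedness of q
        have hq_split : q.Pairwise (br g') := hqsorted
        have : ∀ x ∈ q.take c, ∀ y ∈ q.drop c, br g' x y := by
          have := (List.pairwise_append.mp (by rw [List.take_append_drop]; exact hq_split : (q.take c ++ q.drop c).Pairwise (br g'))).2.2
          exact this
        have h1 := hqmem i (htake_sub i hi)
        have h2 := hqmem j (hdrop_sub j hj)
        exact hbr i j h1.1 h1.2 h2.1 h2.2 (this i hi j hj)

end S18
namespace S18

lemma length_plus (g : List ℕ) (a : ℕ) : (plus g a).length = g.length := by simp [plus]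

lemma ent_plus (g : List ℕ) (a : ℕ) {i : ℕ} (h1 : 1 ≤ i) (h2 : i ≤ g.length) :
    ent (plus g a) i = if a ≤ ent g i then ent g i + 1 else ent g i := by
  unfold ent plus
  rw [List.getD_eq_getElem _ _ (by simp; omega), List.getD_eq_getElem _ _ (by omega),
    List.getElem_map]

lemma ent_hatd_eq (d : ℕ) (w : List ℕ) {i : ℕ} (h : w.length ≤ i) :
    ent (hatd d w) i = ent w i := by
  unfold hatd
  apply ent_foldl_Mstep_of_ge
  intro j hj
  rw [Finset.mem_sort] at hj
  have := ascSet_le_length hj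
  omega

/-- burget of `hatd` of a one-element extension. -/
lemma burget_hat_concat (d : ℕ) (x : List ℕ) (a : ℕ) :
    burget (hatd d (x ++ [a]))
      = (burget (hatd d x)).take ((hatd d x).countP fun v => decide (v < a))
        ++ (x.length + 1) :: (burget (hatd d x)).drop ((hatd d x).countP fun v => decide (v < a)) := by
  have hg'len : (hatd d x).length = x.length := length_hatd d x
  by_cases hc : (x = [] ∨ ent x x.length < a + d)
  · rw [hatd_append_pos hc]
    have hres := burget_concat (hatd d x) a (plus (hatd d x) a ++ [a])
      (by simp [length_plus])
      (by
        have := ent_append_last (plus (hatd d x) a) a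
        rwa [length_plus] at this)
      (by
        intro i h1 h2
        rw [ent_append_of_le _ a h1 (by rw [length_plus]; exact h2),
          ent_plus _ a h1 h2]
        split <;> omega)
      (by
        intro i j h1 h2 h3 h4 hbr
        rw [show br (plus (hatd d x) a ++ [a]) i j
            ↔ (ent (plus (hatd d x) a ++ [a]) i < ent (plus (hatd d x) a ++ [a]) j
              ∨ (ent (plus (hatd d x) a ++ [a]) i = ent (plus (hatd d x) a ++ [a]) j ∧ j ≤ i))
          from Iff.rfl]
        rw [ent_append_of_le _ a h1 (by rw [length_plus]; exact h2),
          ent_append_of_le _ a h3 (by rw [length_plus]; exact h4),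
          ent_plus _ a h1 h2, ent_plus _ a h3 h4]
        unfold br at hbr
        split <;> split <;> omega)
    rwa [hg'len] at hres
  · rw [hatd_append_neg hc]
    have hres := burget_concat (hatd d x) a (hatd d x ++ [a])
      (by simp)
      (ent_append_last _ _)
      (by intro i h1 h2; rw [ent_append_of_le _ a h1 h2])
      (by
        intro i j h1 h2 h3 h4 hbr
        unfold br at hbr ⊢
        rw [ent_append_of_le _ a h1 h2, ent_append_of_le _ a h3 h4]
        exact hbr)
    rwa [hg'len] at hres

/-- counting values below a threshold is injective for interval-image words. -/
lemma count_lt_inj {g : List ℕ} {m : ℕ} (hchar : ∀ v, v ∈ g ↔ 1 ≤ v ∧ v ≤ m)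
    {a b : ℕ} (ha1 : 1 ≤ a) (ha : a ≤ m + 1) (hb1 : 1 ≤ b) (hb : b ≤ m + 1)
    (h : g.countP (fun v => decide (v < a)) = g.countP (fun v => decide (v < b))) :
    a = b := by
  have key : ∀ u v : ℕ, 1 ≤ u → v ≤ m + 1 → u < v →
      g.countP (fun x => decide (x < u)) < g.countP (fun x => decide (x < v)) := by
    intro u v hu hv huv
    have hmem : u ∈ g := (hchar u).mpr ⟨hu, by omega⟩
    have h2 : u ∈ g.filter (fun x => decide (x < v)) :=
      List.mem_filter.mpr ⟨hmem, by simp; omega⟩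
    have h1 : g.filter (fun x => decide (x < u))
        = (g.filter (fun x => decide (x < v))).filter (fun x => decide (x < u)) := by
      rw [List.filter_filter]
      congr 1
      funext w
      by_cases hw : w < u
      · simp [hw]; omega
      · simp [hw]
    rw [List.countP_eq_length_filter, List.countP_eq_length_filter, h1]
    exact List.length_filter_lt_length_iff_exists.mpr ⟨u, h2, by simp⟩
  rcases lt_trichotomy a b with hab | hab | hab
  · have := key a b ha1 hb hab; omega
  · exact hab
  · have := key b a hb1 ha hab; omega

lemma append_cons_inj {N : ℕ} : ∀ {t₁ t₂ d₁ d₂ : List ℕ}, N ∉ t₁ → N ∉ t₂ →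
    t₁ ++ N :: d₁ = t₂ ++ N :: d₂ → t₁ = t₂ ∧ d₁ = d₂ := by
  intro t₁
  induction t₁ with
  | nil =>
      intro t₂ d₁ d₂ h1 h2 he
      cases t₂ with
      | nil =>
          simp only [List.nil_append, List.cons.injEq] at he
          exact ⟨rfl, he.2⟩
      | cons y t' =>
          simp only [List.nil_append, List.cons_append, List.cons.injEq] at he
          exact absurd (he.1 ▸ List.mem_cons_self (a := y) (l := t')) (by simpa [← he.1] using h2)
  | cons z t ih =>
      intro t₂ d₁ d₂ h1 h2 he
      cases t₂ with
      | nil =>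
          simp only [List.cons_append, List.nil_append, List.cons.injEq] at he
          exact absurd (he.1 ▸ List.mem_cons_self (a := z) (l := t)) (by simpa [he.1] using h1)
      | cons y t' =>
          simp only [List.cons_append, List.cons.injEq] at he
          obtain ⟨rfl, he⟩ := he
          have := ih (fun hc => h1 (List.mem_cons_of_mem _ hc))
            (fun hc => h2 (List.mem_cons_of_mem _ hc)) he
          exact ⟨by rw [this.1], this.2⟩

/-- The key injectivity lemma. -/
lemma key (d : ℕ) : ∀ n (x y : List ℕ), IsDAscSeq d x → IsDAscSeq d y →
    x.length = n → y.length = n →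
    burget (hatd d x) = burget (hatd d y) → hatd d x = hatd d y := by
  intro n
  induction n with
  | zero =>
      intro x y _ _ hxl hyl _
      rw [List.length_eq_zero_iff.mp hxl, List.length_eq_zero_iff.mp hyl]
  | succ n ih =>
      intro x y hx hy hxl hyl hb
      have hxne : x ≠ [] := by intro h; rw [h] at hxl; simp at hxl
      have hyne : y ≠ [] := by intro h; rw [h] at hyl; simp at hyl
      obtain ⟨x', a, rfl⟩ : ∃ x' a, x = x' ++ [a] :=
        ⟨x.dropLast, x.getLast hxne, (List.dropLast_append_getLast hxne).symm⟩
      obtain ⟨y', b, rfl⟩ : ∃ y' b, y = y' ++ [b] :=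
        ⟨y.dropLast, y.getLast hyne, (List.dropLast_append_getLast hyne).symm⟩
      have hxl' : x'.length = n := by simp at hxl; omega
      have hyl' : y'.length = n := by simp at hyl; omega
      have hx' : IsDAscSeq d x' := by
        have := dasc_take hx x'.length; rwa [List.take_left] at this
      have hy' : IsDAscSeq d y' := by
        have := dasc_take hy y'.length; rwa [List.take_left] at this
      rw [burget_hat_concat, burget_hat_concat, hxl', hyl'] at hb
      set cx := (hatd d x').countP (fun v => decide (v < a)) with hcx
      set cy := (hatd d y').countP (fun v => decide (v < b)) with hcy
      set qx := burget (hatd d x') with hqx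
      set qy := burget (hatd d y') with hqy
      have hqxlen : qx.length = n := by rw [hqx, length_burget, length_hatd, hxl']
      have hqylen : qy.length = n := by rw [hqy, length_burget, length_hatd, hyl']
      have hNx : (n+1) ∉ qx := by
        intro hmem
        have := mem_burget.mp hmem
        rw [length_hatd, hxl'] at this
        omega
      have hNy : (n+1) ∉ qy := by
        intro hmem
        have := mem_burget.mp hmem
        rw [length_hatd, hyl'] at this
        omega
      have hcxle : cx ≤ n := by
        rw [hcx]
        have := List.countP_le_length (p := fun v => decide (v < a)) (l := hatd d x')
        rwa [length_hatd, hxl'] at this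
      have hcyle : cy ≤ n := by
        rw [hcy]
        have := List.countP_le_length (p := fun v => decide (v < b)) (l := hatd d y')
        rwa [length_hatd, hyl'] at this
      obtain ⟨hteq, hdeq⟩ := append_cons_inj
        (fun hc => hNx (List.mem_of_mem_take hc))
        (fun hc => hNy (List.mem_of_mem_take hc)) hb
      have hqeq : qx = qy := by
        rw [← List.take_append_drop cx qx, ← List.take_append_drop cy qy, hteq, hdeq]
      have hhat' : hatd d x' = hatd d y' := ih x' y' hx' hy' hxl' hyl' hqeq
      have hceq : cx = cy := by
        have hlen : (qx.take cx).length = (qy.take cy).length := by rw [hteq]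
        rw [List.length_take, List.length_take] at hlen
        omega
      obtain ⟨hchar, hmax⟩ := hat_spec d x' hx'
      obtain ⟨hchary, hmaxy⟩ := hat_spec d y' hy'
      have ha1 : 1 ≤ a := (hx.1 a (by simp)).1
      have hb1 : 1 ≤ b := (hy.1 b (by simp)).1
      have hale : a ≤ 1 + ascCard d x' := by
        have := dasc_ent_le hx (i := x'.length + 1) (by omega) (by simp)
        rwa [ent_append_last, show x'.length + 1 - 1 = x'.length by omega,
          List.take_left] at this
      have hble : b ≤ 1 + ascCard d y' := by
        have := dasc_ent_le hy (i := y'.length + 1) (by omega) (by simp)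
        rwa [ent_append_last, show y'.length + 1 - 1 = y'.length by omega,
          List.take_left] at this
      have hacc : ascCard d y' = ascCard d x' := by rw [← hmax, ← hmaxy, hhat']
      have hab : a = b := by
        apply count_lt_inj (g := hatd d x') (m := ascCard d x') hchar ha1 (by omega)
          hb1 (by omega)
        rw [hcx] at hceq
        rw [hceq, hcy, hhat']
      subst hab
      have hxy0 : (x' = []) ↔ (y' = []) := by
        constructor <;> intro h
        · apply List.length_eq_zero_iff.mp; rw [hyl', ← hxl', h]; rfl
        · apply List.length_eq_zero_iff.mp; rw [hxl', ← hyl', h]; rfl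
      have hlast : ent x' x'.length = ent y' y'.length := by
        rw [← ent_hatd_eq d x' (le_refl x'.length), ← ent_hatd_eq d y' (le_refl y'.length),
          hxl', hyl', hhat']
      have hcond : (x' = [] ∨ ent x' x'.length < a + d)
          ↔ (y' = [] ∨ ent y' y'.length < a + d) := by
        rw [hxy0, hlast]
      by_cases hcxp : (x' = [] ∨ ent x' x'.length < a + d)
      · rw [hatd_append_pos hcxp, hatd_append_pos (hcond.mp hcxp), hhat']
      · rw [hatd_append_neg hcxp, hatd_append_neg (fun h => hcxp (hcond.mpr h)), hhat']

end S18
/-- for all `d, n ≥ 0`, the map `burget` is injective on the set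
`Â_{d,n}` of modified `d`-ascent sequences of length `n`. -/
theorem stmt18 (d n : ℕ) :
    Set.InjOn burget
      {g : List ℕ | ∃ w : List ℕ, IsDAscSeq d w ∧ w.length = n ∧ g = hatd d w} := by
  rintro g1 ⟨x, hx, hxl, rfl⟩ g2 ⟨y, hy, hyl, rfl⟩ hb
  exact S18.key d n x y hx hy hxl hyl hb
end
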